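/- arXiv:2311.18426 — 3 statements merged into one kernel-verified Lean document; each statement's English description precedes it below -/
import Mathlib

section
/- Let f : ℝ → ℝ be continuously differentiable, let α ∈ (0,1), and let x, c ∈ ℝ with x ≠ c. Define ζ_x(t) = f(t) − f(x) − f′(x)(t−x). Then D^α_c f(x) − f′(x)(x−c)/(Γ(2−α)·|x−c|^α) = −ζ_x(c)/(Γ(1−α)·|x−c|^α) − (α·sgn(x−c)/Γ(1−α)) · ∫_c^x ζ_x(t)/|x−t|^{α+1} dt. -/
/-!
Put `ζ t = f t - f x - f' x * (t - x)` and split `f' = ζ' + f' x` inside the Caputo integral.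
The constant part integrates explicitly to `f' x * (x - c) * |x - c| ^ (-α) / (1 - α)`, which
becomes the `Γ(2 - α)` term since `Γ(2 - α) = (1 - α) Γ(1 - α)`. The `ζ'` part is integrated by
parts against the kernel `|x - t| ^ (-α)`. As `ζ x = 0` and `ζ` is differentiable at `x`, the
product `ζ t * |x - t| ^ (-α) = O(|x - t| ^ (1 - α))` vanishes at `t = x`, so only the boundary term
at `c` survives; differentiating the kernel produces `α * sgn (x - c) * ζ t * |x - t| ^ (-α - 1)`,
which is integrable because the mean value theorem gives `|ζ t| ≤ M * |t - x|`.
-/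

open MeasureTheory Set Filter Topology intervalIntegral Asymptotics

/-- The Caputo fractional derivative of order `α ∈ (0,1)` with terminal `c`. -/
noncomputable def caputo (α c : ℝ) (f : ℝ → ℝ) (x : ℝ) : ℝ :=
  (1 / Real.Gamma (1 - α)) * ∫ t in c..x, deriv f t / |x - t| ^ α

section AbsRpow

variable {r : ℝ}

theorem intervalIntegrable_abs_rpow (hr : -1 < r) (a b : ℝ) :
    IntervalIntegrable (fun u : ℝ => |u| ^ r) volume a b := by
  have of_nonneg : ∀ y, 0 ≤ y → IntervalIntegrable (fun u : ℝ => |u| ^ r) volume 0 y := by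
    intro y hy
    have h := intervalIntegrable_rpow' (a := 0) (b := y) hr
    rw [intervalIntegrable_iff, uIoc_of_le hy] at h ⊢
    exact h.congr_fun (fun u hu => by rw [abs_of_pos hu.1]) measurableSet_Ioc
  have from_zero : ∀ y, IntervalIntegrable (fun u : ℝ => |u| ^ r) volume 0 y := by
    intro y
    rcases le_total 0 y with hy | hy
    · exact of_nonneg y hy
    · simpa using (of_nonneg (-y) (neg_nonneg.mpr hy)).comp_sub_left 0
  exact (from_zero a).symm.trans (from_zero b)

theorem integral_abs_rpow (hr : -1 < r) (y : ℝ) :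
    ∫ u in (0 : ℝ)..y, |u| ^ r = y * |y| ^ r / (r + 1) := by
  have of_nonneg : ∀ z, 0 ≤ z → ∫ u in (0 : ℝ)..z, |u| ^ r = z * |z| ^ r / (r + 1) := by
    intro z hz
    have hr' : r + 1 ≠ 0 := by linarith
    rw [integral_congr (g := fun u => u ^ r) fun u hu => by
        rw [uIcc_of_le hz] at hu; simp only [abs_of_nonneg hu.1],
      integral_rpow (Or.inl hr), Real.zero_rpow hr', abs_of_nonneg hz,
      Real.rpow_add_one' hz hr']
    ring
  rcases le_total 0 y with hy | hy
  · exact of_nonneg y hy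
  · have hneg := integral_comp_neg (a := 0) (b := y) (fun u => |u| ^ r)
    simp only [abs_neg, neg_zero] at hneg
    rw [hneg, integral_symm, of_nonneg (-y) (neg_nonneg.mpr hy), abs_neg]
    ring

theorem intervalIntegrable_abs_sub_rpow (hr : -1 < r) (x a b : ℝ) :
    IntervalIntegrable (fun t : ℝ => |x - t| ^ r) volume a b := by
  simpa using (intervalIntegrable_abs_rpow hr (x - a) (x - b)).comp_sub_left x

theorem integral_abs_sub_rpow (hr : -1 < r) (x c : ℝ) :
    ∫ t in c..x, |x - t| ^ r = (x - c) * |x - c| ^ r / (r + 1) := by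
  rw [integral_comp_sub_left (fun u => |u| ^ r) x, sub_self, integral_abs_rpow hr]

end AbsRpow

theorem Real.sign_eq_signType_sign (r : ℝ) : Real.sign r = SignType.sign r := by
  rcases lt_trichotomy r 0 with h | rfl | h
  · simp [Real.sign_of_neg h, h]
  · simp
  · simp [Real.sign_of_pos h, h]

theorem sign_sub_eq_of_mem_Ioo {x c t : ℝ} (ht : t ∈ Ioo (min c x) (max c x)) :
    Real.sign (x - t) = Real.sign (x - c) := by
  rcases le_total c x with h | h
  · rw [min_eq_left h, max_eq_right h] at ht
    rw [Real.sign_of_pos (sub_pos.mpr ht.2), Real.sign_of_pos (by linarith [ht.1, ht.2])]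
  · rw [min_eq_right h, max_eq_left h] at ht
    rw [Real.sign_of_neg (sub_neg.mpr ht.1), Real.sign_of_neg (by linarith [ht.1, ht.2])]

theorem hasDerivAt_abs_sub_rpow (p : ℝ) {x t : ℝ} (ht : t ≠ x) :
    HasDerivAt (fun u => |x - u| ^ p) (-(p * Real.sign (x - t) * |x - t| ^ (p - 1))) t := by
  have hxt : x - t ≠ 0 := sub_ne_zero.mpr ht.symm
  have habs : HasDerivAt (fun u => |x - u|) (-Real.sign (x - t)) t := by
    simpa [Function.comp_def, Real.sign_eq_signType_sign] using
      (hasDerivAt_abs hxt).comp t ((hasDerivAt_id t).const_sub x)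
  convert habs.rpow_const (p := p) (Or.inl (abs_ne_zero.mpr hxt)) using 1
  ring

section WeaklySingular

variable {g : ℝ → ℝ} {x : ℝ}

theorem tendsto_mul_abs_sub_rpow_neg {β : ℝ} (hg : DifferentiableAt ℝ g x) (hgx : g x = 0)
    (hβ : β < 1) : Tendsto (fun t => g t * |x - t| ^ (-β)) (𝓝 x) (𝓝 0) := by
  have hO : g =O[𝓝 x] (· - x) := by simpa [hgx] using hg.isBigO_sub
  refine (hO.mul (isBigO_refl (fun t => |x - t| ^ (-β)) _)).trans_tendsto ?_
  rw [tendsto_zero_iff_norm_tendsto_zero]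
  have hpow : Tendsto (fun t => |x - t| ^ (1 - β)) (𝓝 x) (𝓝 0) := by
    have := ((continuous_const.sub continuous_id : Continuous fun t : ℝ => x - t).abs.rpow_const
      (fun _ => Or.inr (by linarith : 0 ≤ 1 - β))).tendsto x
    simpa [Real.zero_rpow (by linarith : 1 - β ≠ 0)] using this
  refine hpow.congr fun t => ?_
  rw [norm_mul, Real.norm_eq_abs, Real.norm_of_nonneg (by positivity), abs_sub_comm t x,
    sub_eq_add_neg 1 β, Real.rpow_one_add' (abs_nonneg _) (by linarith)]

theorem continuous_mul_abs_sub_rpow_neg {β : ℝ} (hg : Differentiable ℝ g) (hgx : g x = 0)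
    (hβ : β < 1) : Continuous fun t => g t * |x - t| ^ (-β) := by
  rw [continuous_iff_continuousAt]
  intro t
  rcases eq_or_ne t x with rfl | htx
  · simpa [ContinuousAt, hgx] using tendsto_mul_abs_sub_rpow_neg (hg t) hgx hβ
  · exact hg.continuous.continuousAt.mul <| (continuousAt_const.sub continuousAt_id).abs.rpow_const
      (Or.inl (abs_ne_zero.mpr (sub_ne_zero.mpr htx.symm)))

theorem intervalIntegrable_mul_abs_sub_rpow_of_abs_le {M r c : ℝ} (hg : Continuous g)
    (hr : -2 < r) (hbound : ∀ t ∈ uIcc c x, |g t| ≤ M * |t - x|) :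
    IntervalIntegrable (fun t => g t * |x - t| ^ r) volume c x := by
  refine ((intervalIntegrable_abs_sub_rpow (by linarith : -1 < r + 1) x c x).const_mul M).mono_fun'
    (hg.measurable.mul ((measurable_const.sub measurable_id).abs.pow_const r)).aestronglyMeasurable
    ?_
  filter_upwards [ae_restrict_mem measurableSet_uIoc, ae_restrict_of_ae (volume.ae_ne x)]
    with t ht htx
  have hpos : 0 < |x - t| := abs_pos.mpr (sub_ne_zero.mpr htx.symm)
  rw [norm_mul, Real.norm_eq_abs, Real.norm_of_nonneg (by positivity)]
  calc |g t| * |x - t| ^ r ≤ M * |t - x| * |x - t| ^ r := by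
        gcongr; exact hbound t (uIoc_subset_uIcc ht)
    _ = M * |x - t| ^ (r + 1) := by rw [abs_sub_comm, Real.rpow_add_one hpos.ne']; ring

theorem integral_deriv_mul_abs_sub_rpow_neg {α : ℝ} (hg : ContDiff ℝ 1 g) (hgx : g x = 0)
    (hα : α < 1) (c : ℝ) :
    ∫ t in c..x, deriv g t * |x - t| ^ (-α) =
      -(g c * |x - c| ^ (-α)) -
        α * Real.sign (x - c) * ∫ t in c..x, g t * |x - t| ^ (-(α + 1)) := by
  have hgd : Differentiable ℝ g := hg.differentiable one_ne_zero
  have hg' : Continuous (deriv g) := hg.continuous_deriv le_rfl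
  obtain ⟨M, hM⟩ :=
    (isCompact_uIcc (a := c) (b := x)).exists_bound_of_continuousOn hg'.continuousOn
  have hbound : ∀ t ∈ uIcc c x, |g t| ≤ M * |t - x| := fun t ht => by
    simpa [hgx] using (convex_uIcc c x).norm_image_sub_le_of_norm_deriv_le
      (fun u _ => hgd u) hM right_mem_uIcc ht
  have hI₁ : IntervalIntegrable (fun t => deriv g t * |x - t| ^ (-α)) volume c x :=
    (intervalIntegrable_abs_sub_rpow (by linarith) x c x).continuousOn_mul hg'.continuousOn
  have hI₂ := intervalIntegrable_mul_abs_sub_rpow_of_abs_le hgd.continuous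
    (by linarith : -2 < -(α + 1)) hbound
  have hderiv : ∀ t ∈ Ioo (min c x) (max c x), HasDerivAt (fun t => g t * |x - t| ^ (-α))
      (deriv g t * |x - t| ^ (-α) + α * Real.sign (x - c) * (g t * |x - t| ^ (-(α + 1)))) t := by
    intro t ht
    have htx : t ≠ x := by
      rintro rfl
      simp only [mem_Ioo, min_lt_iff, lt_max_iff, lt_irrefl, or_false] at ht
      exact ht.1.not_gt ht.2
    refine ((hgd t).hasDerivAt.mul (hasDerivAt_abs_sub_rpow (-α) htx)).congr_deriv ?_
    rw [sign_sub_eq_of_mem_Ioo ht, show -α - 1 = -(α + 1) by ring]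
    ring
  have hFTC := integral_eq_sub_of_hasDeriv_right
    (continuous_mul_abs_sub_rpow_neg hgd hgx hα).continuousOn
    (fun t ht => (hderiv t ht).hasDerivWithinAt) (hI₁.add (hI₂.const_mul _))
  rw [integral_add hI₁ (hI₂.const_mul _), intervalIntegral.integral_const_mul, hgx, zero_mul,
    zero_sub] at hFTC
  linarith

end WeaklySingular

theorem caputo_sub_firstDeriv_eq_general (f : ℝ → ℝ) (hf : ContDiff ℝ 1 f) (α : ℝ)
    (hα : α ∈ Set.Ioo (0 : ℝ) 1) (x c : ℝ) :
    caputo α c f x - deriv f x * (x - c) / (Real.Gamma (2 - α) * |x - c| ^ α) =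
      -((f c - f x - deriv f x * (c - x)) / (Real.Gamma (1 - α) * |x - c| ^ α)) -
        (α * Real.sign (x - c) / Real.Gamma (1 - α)) *
          ∫ t in c..x, (f t - f x - deriv f x * (t - x)) / |x - t| ^ (α + 1) := by
  have hα1 : α < 1 := hα.2
  set ζ : ℝ → ℝ := fun t => f t - f x - deriv f x * (t - x)
  have hζ_deriv : ∀ t, deriv ζ t = deriv f t - deriv f x := fun t =>
    (((hf.differentiable one_ne_zero t).hasDerivAt.sub_const (f x)).sub
      (((hasDerivAt_id t).sub_const x).const_mul (deriv f x))).deriv.trans (by ring)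
  have hζ_smooth : ContDiff ℝ 1 ζ := by fun_prop
  have hIBP := integral_deriv_mul_abs_sub_rpow_neg (x := x) hζ_smooth (by simp [ζ]) hα1 c
  have hkernel : IntervalIntegrable (fun t => |x - t| ^ (-α)) volume c x :=
    intervalIntegrable_abs_sub_rpow (by linarith) x c x
  have hcaputo : ∫ t in c..x, deriv f t / |x - t| ^ α =
      (∫ t in c..x, deriv ζ t * |x - t| ^ (-α)) + deriv f x * ∫ t in c..x, |x - t| ^ (-α) := by
    rw [← intervalIntegral.integral_const_mul, ← integral_add
      (hkernel.continuousOn_mul (hζ_smooth.continuous_deriv le_rfl).continuousOn)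
      (hkernel.const_mul _)]
    refine integral_congr fun t _ => ?_
    simp only [hζ_deriv, Real.rpow_neg (abs_nonneg _)]
    ring
  have hremainder : ∫ t in c..x, ζ t / |x - t| ^ (α + 1) =
      ∫ t in c..x, ζ t * |x - t| ^ (-(α + 1)) :=
    integral_congr fun t _ => by simp only [Real.rpow_neg (abs_nonneg _), div_eq_mul_inv]
  have hΓ : Real.Gamma (2 - α) = (1 - α) * Real.Gamma (1 - α) := by
    rw [show 2 - α = (1 - α) + 1 by ring, Real.Gamma_add_one (by linarith)]
  rw [caputo, hcaputo, hIBP, integral_abs_sub_rpow (by linarith), hremainder, hΓ,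
    Real.rpow_neg (abs_nonneg _), show -α + 1 = 1 - α by ring]
  field_simp
  ring

/-- relation between the Caputo derivative and the first derivative. -/
theorem caputo_sub_firstDeriv_eq (f : ℝ → ℝ) (hf : ContDiff ℝ 1 f) (α : ℝ)
    (hα : α ∈ Set.Ioo (0 : ℝ) 1) (x c : ℝ) (hxc : x ≠ c) :
    caputo α c f x - deriv f x * (x - c) / (Real.Gamma (2 - α) * |x - c| ^ α) =
      -((f c - f x - deriv f x * (c - x)) / (Real.Gamma (1 - α) * |x - c| ^ α)) -
        (α * Real.sign (x - c) / Real.Gamma (1 - α)) *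
          ∫ t in c..x, (f t - f x - deriv f x * (t - x)) / |x - t| ^ (α + 1) :=
  caputo_sub_firstDeriv_eq_general f hf α hα x c
end

section
/- Let f : ℝ → ℝ be continuously differentiable and (L,p)-Hölder smooth for some L ≥ 0, p > 0; let α ∈ (0,1) and x, c ∈ ℝ with x ≠ c. Then |f′(x)(x−c)/(Γ(2−α)·|x−c|^α) − D^α_c f(x)| ≤ (L/(Γ(1−α)·(1+p−α))) · |x−c|^{1+p−α}. -/
/-- `f : ℝ → ℝ` is `(L,p)`-Hölder smooth. -/
def HolderSmooth (L p : ℝ) (f : ℝ → ℝ) : Prop :=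
  ∀ x y : ℝ, |f y - f x - deriv f x * (y - x)| ≤ L / (1 + p) * |y - x| ^ (1 + p)

/-!
Put `g t = f' x * (t - x) - (f t - f x)`. The first term is `f' x` times the Caputo derivative of
the identity, so the difference equals `Γ(1-α)⁻¹ ∫_c^x g'(t) (x-t)^(-α) dt`. Hölder smoothness
controls `g` rather than `g'`: `|g t| ≤ L/(1+p) |x-t|^(1+p)`. Integrating by parts moves the
derivative onto the weight; the boundary term at `c` and `α ∫_c^x g(t) (x-t)^(-α-1) dt` together
are at most `L/(1+p-α) |x-c|^(1+p-α)`. The reflection `t ↦ -t` reduces `x < c` to `c < x`.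
-/

open MeasureTheory Set Filter Topology intervalIntegral

lemma integral_sub_rpow {r : ℝ} (hr : -1 < r) (c x : ℝ) :
    ∫ t in c..x, (x - t) ^ r = (x - c) ^ (r + 1) / (r + 1) := by
  rw [integral_comp_sub_left (fun u => u ^ r) x, sub_self, integral_rpow (Or.inl hr),
    Real.zero_rpow (by linarith), sub_zero]

lemma intervalIntegrable_sub_rpow {r : ℝ} (hr : -1 < r) (c x : ℝ) :
    IntervalIntegrable (fun t => (x - t) ^ r) volume c x := by
  simpa using (intervalIntegrable_rpow' (a := x - c) (b := x - x) hr).comp_sub_left x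

section WeightedIntegral

variable {g g' : ℝ → ℝ} {K α β γ c x : ℝ}

lemma abs_mul_rpow_le_of_abs_le {y s : ℝ} (hs : 0 < s) (hy : |y| ≤ K * s ^ β) :
    |y * s ^ γ| ≤ K * s ^ (β + γ) := by
  rw [abs_mul, abs_of_pos (Real.rpow_pos_of_pos hs γ), Real.rpow_add hs, ← mul_assoc]
  exact mul_le_mul_of_nonneg_right hy (Real.rpow_pos_of_pos hs γ).le

lemma abs_mul_rpow_neg_le_of_abs_le {y s : ℝ} (hs : 0 ≤ s) (hα : 0 ≤ α) (hαβ : α < β)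
    (hy : |y| ≤ K * s ^ β) : |y * s ^ (-α)| ≤ K * s ^ (β - α) := by
  rcases hs.lt_or_eq with hs | rfl
  · simpa [sub_eq_add_neg] using abs_mul_rpow_le_of_abs_le (γ := -α) hs hy
  · rw [Real.zero_rpow (by linarith)] at hy
    have hy0 : y = 0 := by simpa using hy
    simp [hy0, Real.zero_rpow (sub_ne_zero.2 hαβ.ne')]

lemma ae_abs_mul_sub_rpow_le (hbound : ∀ t ∈ Icc c x, |g t| ≤ K * (x - t) ^ β) :
    ∀ᵐ t, t ∈ Ioc c x → ‖g t * (x - t) ^ γ‖ ≤ K * (x - t) ^ (β + γ) := by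
  filter_upwards [(countable_singleton x).ae_notMem volume] with t htx ht
  exact abs_mul_rpow_le_of_abs_le (sub_pos.2 (ht.2.lt_of_ne htx))
    (hbound t (Ioc_subset_Icc_self ht))

lemma intervalIntegrable_mul_sub_rpow (hcx : c ≤ x) (hαβ : α < β)
    (hg : ContinuousOn g (Ico c x)) (hbound : ∀ t ∈ Icc c x, |g t| ≤ K * (x - t) ^ β) :
    IntervalIntegrable (fun t => g t * (x - t) ^ (-α - 1)) volume c x := by
  refine ((intervalIntegrable_sub_rpow (r := β + (-α - 1)) (by linarith) c x).const_mul
    K).mono_fun' ?_ ?_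
  · rw [uIoc_of_le hcx, ← Measure.restrict_congr_set Ioo_ae_eq_Ioc]
    refine ContinuousOn.aestronglyMeasurable (fun t ht => ?_) measurableSet_Ioo
    have hψ : ContinuousAt (fun t => (x - t) ^ (-α - 1)) t :=
      (continuousAt_const.sub continuousAt_id).rpow_const (Or.inl (sub_pos.2 ht.2).ne')
    exact ((hg t ⟨ht.1.le, ht.2⟩).mono Ioo_subset_Ico_self).mul hψ.continuousWithinAt
  · rw [EventuallyLE, uIoc_of_le hcx, ae_restrict_iff' measurableSet_Ioc]
    exact ae_abs_mul_sub_rpow_le hbound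

/-- The boundary term at `x` vanishes because `g` decays like `(x - t) ^ β` with `β > α`. -/
lemma integral_deriv_mul_sub_rpow_neg (hcx : c ≤ x) (hα : 0 ≤ α) (hαβ : α < β)
    (hg : ∀ t ∈ Ico c x, HasDerivAt g (g' t) t)
    (hint : IntervalIntegrable (fun t => g' t * (x - t) ^ (-α)) volume c x)
    (hbound : ∀ t ∈ Icc c x, |g t| ≤ K * (x - t) ^ β) :
    ∫ t in c..x, g' t * (x - t) ^ (-α) =
      -(g c * (x - c) ^ (-α)) - α * ∫ t in c..x, g t * (x - t) ^ (-α - 1) := by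
  have hint' := intervalIntegrable_mul_sub_rpow hcx hαβ
    (fun t ht => (hg t ht).continuousAt.continuousWithinAt) hbound
  set F : ℝ → ℝ := fun t => g t * (x - t) ^ (-α)
  have hFle : ∀ t ∈ Icc c x, |F t| ≤ K * (x - t) ^ (β - α) := fun t ht =>
    abs_mul_rpow_neg_le_of_abs_le (sub_nonneg.2 ht.2) hα hαβ (hbound t ht)
  have hFx : F x = 0 := by
    simpa [Real.zero_rpow (sub_ne_zero.2 hαβ.ne')] using hFle x ⟨hcx, le_rfl⟩
  have hFcont : ContinuousOn F (Icc c x) := by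
    intro t ht
    rcases ht.2.lt_or_eq with htx | rfl
    · have hψ : ContinuousAt (fun t => (x - t) ^ (-α)) t :=
        (continuousAt_const.sub continuousAt_id).rpow_const (Or.inl (sub_pos.2 htx).ne')
      exact ((hg t ⟨ht.1, htx⟩).continuousAt.mul hψ).continuousWithinAt
    · have hweight : ContinuousAt (fun s => K * (t - s) ^ (β - α)) t :=
        continuousAt_const.mul ((continuousAt_const.sub continuousAt_id).rpow_const
          (Or.inr (sub_pos.2 hαβ).le))
      have hlim := hweight.tendsto.mono_left (nhdsWithin_le_nhds (s := Icc c t))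
      simp only [sub_self, Real.zero_rpow (sub_ne_zero.2 hαβ.ne'), mul_zero] at hlim
      rw [ContinuousWithinAt, hFx]
      exact squeeze_zero_norm' (eventually_nhdsWithin_of_forall hFle) hlim
  have hF' : ∀ t ∈ Ioo c x,
      HasDerivAt F (g' t * (x - t) ^ (-α) + α * (g t * (x - t) ^ (-α - 1))) t := by
    intro t ht
    have hψ := ((hasDerivAt_id' t).const_sub x).rpow_const (p := -α) (Or.inl (sub_pos.2 ht.2).ne')
    exact ((hg t ⟨ht.1.le, ht.2⟩).mul hψ).congr_deriv (by ring)
  have hftc := integral_eq_sub_of_hasDerivAt_of_le hcx hFcont hF' (hint.add (hint'.const_mul α))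
  rw [integral_add hint (hint'.const_mul α), intervalIntegral.integral_const_mul, hFx] at hftc
  linarith

lemma abs_integral_deriv_mul_sub_rpow_neg_le (hcx : c ≤ x) (hα : 0 ≤ α) (hαβ : α < β)
    (hg : ∀ t ∈ Ico c x, HasDerivAt g (g' t) t)
    (hint : IntervalIntegrable (fun t => g' t * (x - t) ^ (-α)) volume c x)
    (hbound : ∀ t ∈ Icc c x, |g t| ≤ K * (x - t) ^ β) :
    |∫ t in c..x, g' t * (x - t) ^ (-α)| ≤ K * β / (β - α) * (x - c) ^ (β - α) := by
  have hβα : 0 < β - α := sub_pos.2 hαβ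
  have hboundary : |g c * (x - c) ^ (-α)| ≤ K * (x - c) ^ (β - α) :=
    abs_mul_rpow_neg_le_of_abs_le (sub_nonneg.2 hcx) hα hαβ (hbound c ⟨le_rfl, hcx⟩)
  have hrest : |∫ t in c..x, g t * (x - t) ^ (-α - 1)| ≤ K * (x - c) ^ (β - α) / (β - α) := by
    have h := norm_integral_le_of_norm_le hcx (ae_abs_mul_sub_rpow_le (γ := -α - 1) hbound)
      ((intervalIntegrable_sub_rpow (r := β + (-α - 1)) (by linarith) c x).const_mul K)
    rwa [intervalIntegral.integral_const_mul, integral_sub_rpow (by linarith),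
      show β + (-α - 1) + 1 = β - α by ring, ← mul_div_assoc] at h
  rw [integral_deriv_mul_sub_rpow_neg hcx hα hαβ hg hint hbound]
  calc |-(g c * (x - c) ^ (-α)) - α * ∫ t in c..x, g t * (x - t) ^ (-α - 1)|
      ≤ |g c * (x - c) ^ (-α)| + α * |∫ t in c..x, g t * (x - t) ^ (-α - 1)| := by
        refine (abs_sub _ _).trans_eq ?_
        rw [abs_neg, abs_mul α, abs_of_nonneg hα]
    _ ≤ K * (x - c) ^ (β - α) + α * (K * (x - c) ^ (β - α) / (β - α)) := by gcongr
    _ = K * β / (β - α) * (x - c) ^ (β - α) := by field_simp; ring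

end WeightedIntegral

lemma caputo_eq_integral_mul_sub_rpow_neg {α c x : ℝ} (f : ℝ → ℝ) (hcx : c ≤ x) :
    caputo α c f x = (Real.Gamma (1 - α))⁻¹ * ∫ t in c..x, deriv f t * (x - t) ^ (-α) := by
  rw [caputo, one_div]
  congr 1
  refine integral_congr fun t ht => ?_
  rw [uIcc_of_le hcx] at ht
  have hxt : 0 ≤ x - t := sub_nonneg.2 ht.2
  simp only [abs_of_nonneg hxt, Real.rpow_neg hxt, div_eq_mul_inv]

lemma caputo_id {α c x : ℝ} (hα : α < 1) (hcx : c ≤ x) :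
    caputo α c id x = (x - c) / (Real.Gamma (2 - α) * |x - c| ^ α) := by
  have hΓ : Real.Gamma (2 - α) = (1 - α) * Real.Gamma (1 - α) := by
    rw [show 2 - α = 1 - α + 1 by ring, Real.Gamma_add_one (by linarith)]
  rw [caputo_eq_integral_mul_sub_rpow_neg _ hcx, deriv_id']
  simp only [one_mul]
  rw [integral_sub_rpow (by linarith), show -α + 1 = 1 - α by ring,
    Real.rpow_sub' (sub_nonneg.2 hcx) (by linarith), Real.rpow_one,
    abs_of_nonneg (sub_nonneg.2 hcx), hΓ]
  field_simp

lemma mul_caputo_id_sub_caputo {α c x : ℝ} (a : ℝ) {f : ℝ → ℝ} (hα : α < 1) (hcx : c ≤ x)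
    (hf : ContinuousOn (deriv f) (Icc c x)) :
    a * caputo α c id x - caputo α c f x =
      (Real.Gamma (1 - α))⁻¹ * ∫ t in c..x, (a - deriv f t) * (x - t) ^ (-α) := by
  have hψ := intervalIntegrable_sub_rpow (r := -α) (by linarith) c x
  rw [caputo_eq_integral_mul_sub_rpow_neg _ hcx, caputo_eq_integral_mul_sub_rpow_neg _ hcx,
    deriv_id']
  simp only [one_mul, sub_mul]
  rw [integral_sub (hψ.const_mul a) (hψ.continuousOn_mul (by rwa [uIcc_of_le hcx])),
    intervalIntegral.integral_const_mul]
  ring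

lemma caputo_comp_neg (α c : ℝ) (f : ℝ → ℝ) (x : ℝ) :
    caputo α (-c) (fun t => f (-t)) (-x) = caputo α c f x := by
  simp only [caputo, deriv_comp_neg]
  congr 1
  have h : ∀ t, -deriv f (-t) / |-x - t| ^ α = -(deriv f (-t) / |x - -t| ^ α) := fun t => by
    rw [show -x - t = -(x - -t) by ring, abs_neg, neg_div]
  simp_rw [h]
  rw [integral_comp_neg (fun s => -(deriv f s / |x - s| ^ α)), neg_neg, neg_neg,
    intervalIntegral.integral_neg, integral_symm, neg_neg]

lemma HolderSmooth.comp_neg {L p : ℝ} {f : ℝ → ℝ} (hf : HolderSmooth L p f) :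
    HolderSmooth L p (fun t => f (-t)) := by
  intro x y
  simp only [deriv_comp_neg]
  calc |f (-y) - f (-x) - -deriv f (-x) * (y - x)|
      = |f (-y) - f (-x) - deriv f (-x) * (-y - -x)| := by ring_nf
    _ ≤ L / (1 + p) * |-y - -x| ^ (1 + p) := hf (-x) (-y)
    _ = L / (1 + p) * |y - x| ^ (1 + p) := by rw [neg_sub_neg, abs_sub_comm]

theorem abs_firstDeriv_sub_caputo_le_of_holderSmooth_general (f : ℝ → ℝ) (hf : ContDiff ℝ 1 f)
    (L p : ℝ) (hp : 0 < p) (hsmooth : HolderSmooth L p f)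
    (α : ℝ) (hα : α ∈ Set.Ioo (0 : ℝ) 1) (x c : ℝ) :
    |deriv f x * (x - c) / (Real.Gamma (2 - α) * |x - c| ^ α) - caputo α c f x| ≤
      L / (Real.Gamma (1 - α) * (1 + p - α)) * |x - c| ^ (1 + p - α) := by
  wlog hcx : c ≤ x generalizing f x c
  · have h := this (fun t => f (-t)) (hf.comp contDiff_neg) hsmooth.comp_neg (-x) (-c)
      (by linarith)
    rwa [caputo_comp_neg, deriv_comp_neg, neg_neg, neg_sub_neg, abs_sub_comm c x,
      show -deriv f x * (c - x) = deriv f x * (x - c) by ring] at h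
  obtain ⟨hα0, hα1⟩ := hα
  have hΓ : 0 < Real.Gamma (1 - α) := Real.Gamma_pos_of_pos (by linarith)
  have hderiv : Continuous (deriv f) := hf.continuous_deriv le_rfl
  set g : ℝ → ℝ := fun t => deriv f x * (t - x) - (f t - f x)
  have hg : ∀ t, HasDerivAt g (deriv f x - deriv f t) t := fun t =>
    ((((hasDerivAt_id' t).sub_const x).const_mul (deriv f x)).sub
      (((hf.differentiable one_ne_zero) t).hasDerivAt.sub_const (f x))).congr_deriv (by ring)
  have hbound : ∀ t ∈ Icc c x, |g t| ≤ L / (1 + p) * (x - t) ^ (1 + p) := fun t ht => by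
    have h := hsmooth x t
    rwa [abs_sub_comm t x, abs_of_nonneg (sub_nonneg.2 ht.2), abs_sub_comm] at h
  have hint : IntervalIntegrable (fun t => (deriv f x - deriv f t) * (x - t) ^ (-α)) volume c x :=
    (intervalIntegrable_sub_rpow (by linarith) c x).continuousOn_mul
      (continuous_const.sub hderiv).continuousOn
  have key := abs_integral_deriv_mul_sub_rpow_neg_le hcx hα0.le (by linarith) (fun t _ => hg t)
    hint hbound
  rw [mul_div_assoc, ← caputo_id hα1 hcx, mul_caputo_id_sub_caputo _ hα1 hcx hderiv.continuousOn,
    abs_mul, abs_of_pos (inv_pos.2 hΓ), abs_of_nonneg (sub_nonneg.2 hcx)]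
  calc (Real.Gamma (1 - α))⁻¹ * |∫ t in c..x, (deriv f x - deriv f t) * (x - t) ^ (-α)|
      ≤ (Real.Gamma (1 - α))⁻¹ *
          (L / (1 + p) * (1 + p) / (1 + p - α) * (x - c) ^ (1 + p - α)) := by gcongr
    _ = L / (Real.Gamma (1 - α) * (1 + p - α)) * (x - c) ^ (1 + p - α) := by
        field_simp

/-- for `(L,p)`-Hölder smooth `f`, the Caputo derivative is close to the
corresponding first-derivative expression. -/
theorem abs_firstDeriv_sub_caputo_le_of_holderSmooth (f : ℝ → ℝ) (hf : ContDiff ℝ 1 f)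
    (L p : ℝ) (hL : 0 ≤ L) (hp : 0 < p) (hsmooth : HolderSmooth L p f)
    (α : ℝ) (hα : α ∈ Set.Ioo (0 : ℝ) 1) (x c : ℝ) (hxc : x ≠ c) :
    |deriv f x * (x - c) / (Real.Gamma (2 - α) * |x - c| ^ α) - caputo α c f x| ≤
      L / (Real.Gamma (1 - α) * (1 + p - α)) * |x - c| ^ (1 + p - α) :=
  abs_firstDeriv_sub_caputo_le_of_holderSmooth_general f hf L p hp hsmooth α hα x c
end

section
/- Let f : ℝ → ℝ be twice continuously differentiable, L-smooth, and μ-strongly convex with 0 ≤ μ ≤ L; let α ∈ (0,1) and β ≤ 0. Set γ = (1−α)/(2−α), K₁ = ((L+μ)/2)(β−γ), K₂ = ((μ−L)/2)(β−γ). Then for all x, c with x ≠ c: |δ^{α,β}_c f(x) − f′(x) − K₁(x−c)| ≤ K₂·|x−c|. -/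
/-- The Caputo fractional derivative of order `1 + α` (for `α ∈ (0,1)`) with terminal `c`. -/
noncomputable def caputoSucc (α c : ℝ) (f : ℝ → ℝ) (x : ℝ) : ℝ :=
  (Real.sign (x - c) / Real.Gamma (1 - α)) *
    ∫ t in c..x, deriv (deriv f) t / |x - t| ^ α

/-- The fractional gradient operator `δ^{α,β}_c f (x)`, with the convention that it is `0`
when `x = c`. -/
noncomputable def fracGrad (α β c : ℝ) (f : ℝ → ℝ) (x : ℝ) : ℝ :=
  if x = c then 0
  else (Real.Gamma (2 - α) * |x - c| ^ α / (x - c)) *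
    (caputo α c f x + β * |x - c| * caputoSucc α c f x)

/-- `f : ℝ → ℝ` is `L`-smooth. -/
def RSmooth (L : ℝ) (f : ℝ → ℝ) : Prop :=
  ∀ x y : ℝ, |f y - f x - deriv f x * (y - x)| ≤ L / 2 * (y - x) ^ 2

/-- `f : ℝ → ℝ` is `μ`-strongly convex. -/
def RStrongConvex (μ : ℝ) (f : ℝ → ℝ) : Prop :=
  ∀ x y : ℝ, μ / 2 * (y - x) ^ 2 ≤ f y - f x - deriv f x * (y - x)

open intervalIntegral Set
open MeasureTheory (volume ae_of_all)

theorem intervalIntegral_div_abs_sub_rpow (g : ℝ → ℝ) (α c x : ℝ) :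
    ∫ t in c..x, g t / |x - t| ^ α =
      (x - c) * |x - c| ^ (-α) * ∫ u in (0 : ℝ)..1, g (x - (x - c) * u) * u ^ (-α) := by
  have hsub :=
    smul_integral_comp_sub_mul (a := 0) (b := 1) (fun t => g t / |x - t| ^ α) (x - c) x
  simp only [mul_one, mul_zero, sub_sub_cancel, sub_zero, smul_eq_mul] at hsub
  rw [← hsub, mul_assoc, ← integral_const_mul (|x - c| ^ (-α))]
  congr 1
  refine integral_congr fun (u : ℝ) hmem => ?_
  have hu : 0 ≤ u := (uIcc_of_le (zero_le_one (α := ℝ)) ▸ hmem).1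
  simp only [abs_mul, abs_of_nonneg hu, Real.mul_rpow (abs_nonneg _) hu,
    Real.rpow_neg (abs_nonneg _), Real.rpow_neg hu]
  ring

theorem Real.sign_mul_abs (r : ℝ) : Real.sign r * |r| = r := by
  rcases lt_trichotomy r 0 with hr | rfl | hr
  · rw [Real.sign_of_neg hr, abs_of_neg hr, neg_one_mul, neg_neg]
  · rw [abs_zero, mul_zero]
  · rw [Real.sign_of_pos hr, abs_of_pos hr, one_mul]

theorem fracGrad_eq_integral {α : ℝ} (hα : α < 1) (β c : ℝ) {f : ℝ → ℝ}
    (hf₁ : Continuous (deriv f)) (hf₂ : Continuous (deriv (deriv f))) {x : ℝ} (hxc : x ≠ c) :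
    fracGrad α β c f x = (1 - α) * ∫ u in (0 : ℝ)..1,
      (deriv f (x - (x - c) * u) + β * (x - c) * deriv (deriv f) (x - (x - c) * u)) * u ^ (-α) := by
  have hh : x - c ≠ 0 := sub_ne_zero.mpr hxc
  have hΓ : Real.Gamma (2 - α) = (1 - α) * Real.Gamma (1 - α) := by
    rw [← Real.Gamma_add_one (by linarith)]; ring_nf
  have hΓ1 : Real.Gamma (1 - α) ≠ 0 := (Real.Gamma_pos_of_pos (by linarith)).ne'
  have hpow : |x - c| ^ α * |x - c| ^ (-α) = 1 := by
    rw [Real.rpow_neg (abs_nonneg _), mul_inv_cancel₀ (by positivity)]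
  have hs := Real.sign_mul_abs (x - c)
  have hw : ∀ g : ℝ → ℝ, Continuous g →
      IntervalIntegrable (fun u => g u * u ^ (-α)) volume 0 1 := fun g hg =>
    (intervalIntegrable_rpow' (by linarith : (-1 : ℝ) < -α)).continuousOn_mul hg.continuousOn
  have hsplit : ∫ u in (0 : ℝ)..1,
      (deriv f (x - (x - c) * u) + β * (x - c) * deriv (deriv f) (x - (x - c) * u)) * u ^ (-α) =
      (∫ u in (0 : ℝ)..1, deriv f (x - (x - c) * u) * u ^ (-α)) +
        β * (x - c) * ∫ u in (0 : ℝ)..1, deriv (deriv f) (x - (x - c) * u) * u ^ (-α) := by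
    rw [← integral_const_mul,
      ← integral_add (hw _ (by fun_prop)) ((hw _ (by fun_prop)).const_mul _)]
    exact integral_congr fun u _ => by ring
  rw [hsplit, fracGrad, if_neg hxc, caputo, caputoSucc, intervalIntegral_div_abs_sub_rpow,
    intervalIntegral_div_abs_sub_rpow, hΓ]
  generalize ∫ u in (0 : ℝ)..1, deriv f (x - (x - c) * u) * u ^ (-α) = I₁
  generalize ∫ u in (0 : ℝ)..1, deriv (deriv f) (x - (x - c) * u) * u ^ (-α) = I₂
  field_simp
  linear_combination (1 - α) * (I₁ + β * |x - c| * Real.sign (x - c) * I₂) * hpow +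
    (1 - α) * β * I₂ * hs

theorem integral_affine_mul_rpow_neg {α : ℝ} (hα : α < 1) (a b : ℝ) :
    (1 - α) * ∫ u in (0 : ℝ)..1, (a + b * u) * u ^ (-α) = a + b * ((1 - α) / (2 - α)) := by
  have hsplit : ∀ u ∈ uIcc (0 : ℝ) 1,
      (a + b * u) * u ^ (-α) = a * u ^ (-α) + b * u ^ (1 - α) := by
    intro u hu
    rw [sub_eq_add_neg,
      Real.rpow_one_add' (uIcc_of_le (zero_le_one (α := ℝ)) ▸ hu).1 (by linarith)]
    ring
  rw [integral_congr hsplit,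
    integral_add ((intervalIntegrable_rpow' (by linarith : (-1 : ℝ) < -α)).const_mul a)
      ((intervalIntegrable_rpow' (by linarith : (-1 : ℝ) < 1 - α)).const_mul b),
    integral_const_mul, integral_const_mul,
    integral_rpow (Or.inl (by linarith)), integral_rpow (Or.inl (by linarith)),
    show -α + 1 = 1 - α by ring, show 1 - α + 1 = 2 - α by ring,
    Real.zero_rpow (by linarith), Real.zero_rpow (by linarith), Real.one_rpow, Real.one_rpow]
  field_simp [show (1 : ℝ) - α ≠ 0 by linarith, show (2 : ℝ) - α ≠ 0 by linarith]
  ring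

theorem abs_integral_mul_rpow_neg_sub_le {α : ℝ} (hα : α < 1) {φ : ℝ → ℝ}
    (hφ : ContinuousOn φ (Icc 0 1)) {a b r s : ℝ}
    (hbound : ∀ u ∈ Icc (0 : ℝ) 1, |φ u - (a + b * u)| ≤ r + s * u) :
    |(1 - α) * (∫ u in (0 : ℝ)..1, φ u * u ^ (-α)) - (a + b * ((1 - α) / (2 - α)))| ≤
      r + s * ((1 - α) / (2 - α)) := by
  have hw := intervalIntegrable_rpow' (a := 0) (b := 1) (by linarith : (-1 : ℝ) < -α)
  have hIcc : uIcc (0 : ℝ) 1 = Icc 0 1 := uIcc_of_le zero_le_one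
  have hφw := hw.continuousOn_mul (hIcc ▸ hφ)
  have hlin : ∀ p q : ℝ, ContinuousOn (fun u : ℝ => p + q * u) (uIcc 0 1) := by
    intro p q; fun_prop
  rw [← integral_affine_mul_rpow_neg hα a b, ← mul_sub, ← integral_sub hφw
    (hw.continuousOn_mul (hlin a b)), abs_mul, abs_of_pos (by linarith : (0 : ℝ) < 1 - α),
    ← integral_affine_mul_rpow_neg hα r s, ← Real.norm_eq_abs]
  refine mul_le_mul_of_nonneg_left (norm_integral_le_of_norm_le zero_le_one
    (ae_of_all _ fun u hu => ?_) (hw.continuousOn_mul (hlin r s))) (by linarith)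
  have hwu : 0 ≤ u ^ (-α) := Real.rpow_nonneg hu.1.le _
  rw [← sub_mul, Real.norm_eq_abs, abs_mul, abs_of_nonneg hwu]
  exact mul_le_mul_of_nonneg_right (hbound u (Ioc_subset_Icc_self hu)) hwu

theorem abs_deriv_sub_sub_le {L μ : ℝ} {f : ℝ → ℝ} (hs : RSmooth L f) (hc : RStrongConvex μ f)
    (x y : ℝ) : |deriv f y - deriv f x - (L + μ) / 2 * (y - x)| ≤ (L - μ) / 2 * |y - x| := by
  rcases eq_or_ne y x with rfl | hyx
  · simp
  have hd : 0 < |y - x| := abs_pos.mpr (sub_ne_zero.mpr hyx)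
  have h₁ := hc x y
  have h₂ := hc y x
  have h₃ := abs_le.mp (hs x y)
  have h₄ := abs_le.mp (hs y x)
  refine le_of_mul_le_mul_right ?_ hd
  rw [← abs_mul, mul_assoc, abs_mul_abs_self, abs_le]
  constructor <;> nlinarith

theorem abs_deriv_deriv_sub_le {L μ : ℝ} {f : ℝ → ℝ} (hf : Differentiable ℝ (deriv f))
    (hs : RSmooth L f) (hc : RStrongConvex μ f) (x : ℝ) :
    |deriv (deriv f) x - (L + μ) / 2| ≤ (L - μ) / 2 := by
  have hslope := hasDerivAt_iff_tendsto_slope.mp (hf x).hasDerivAt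
  refine le_of_tendsto ((continuous_abs.tendsto _).comp (hslope.sub_const _))
    (eventually_nhdsWithin_of_forall fun y hy => ?_)
  have hd : 0 < |y - x| := abs_pos.mpr (sub_ne_zero.mpr hy)
  have hslope_sub : slope (deriv f) x y - (L + μ) / 2 =
      (deriv f y - deriv f x - (L + μ) / 2 * (y - x)) / (y - x) := by
    rw [slope_def_field]; field_simp [sub_ne_zero.mpr hy]
  simp only [Function.comp_apply]
  rw [hslope_sub, abs_div, div_le_iff₀ hd]
  exact abs_deriv_sub_sub_le hs hc x y

theorem abs_deriv_add_mul_deriv_deriv_sub_le {L μ β : ℝ} {f : ℝ → ℝ}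
    (hf : Differentiable ℝ (deriv f)) (hs : RSmooth L f) (hc : RStrongConvex μ f) (hβ : β ≤ 0)
    (x h : ℝ) {u : ℝ} (hu : 0 ≤ u) :
    |deriv f (x - h * u) + β * h * deriv (deriv f) (x - h * u) -
        ((deriv f x + (L + μ) / 2 * β * h) + -((L + μ) / 2 * h) * u)| ≤
      -β * ((L - μ) / 2 * |h|) + (L - μ) / 2 * |h| * u := by
  have h₁ := abs_deriv_sub_sub_le hs hc x (x - h * u)
  rw [sub_sub_cancel_left, abs_neg, abs_mul, abs_of_nonneg hu] at h₁
  have h₂ : |β * h * (deriv (deriv f) (x - h * u) - (L + μ) / 2)| ≤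
      -β * ((L - μ) / 2 * |h|) := by
    rw [abs_mul, abs_mul, abs_of_nonpos hβ, mul_comm ((L - μ) / 2), ← mul_assoc]
    exact mul_le_mul_of_nonneg_left (abs_deriv_deriv_sub_le hf hs hc _)
      (mul_nonneg (neg_nonneg.mpr hβ) (abs_nonneg _))
  calc _ = |(deriv f (x - h * u) - deriv f x - (L + μ) / 2 * -(h * u)) +
        β * h * (deriv (deriv f) (x - h * u) - (L + μ) / 2)| := by ring_nf
    _ ≤ _ := (abs_add_le _ _).trans (by linarith)

theorem fracGrad_approx_of_beta_nonpos_general (f : ℝ → ℝ) (hf : ContDiff ℝ 2 f) (L μ : ℝ)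
    (hsmooth : RSmooth L f) (hconv : RStrongConvex μ f)
    (α β : ℝ) (hα : α ∈ Set.Ioo (0 : ℝ) 1) (hβ : β ≤ 0)
    (γ K₁ K₂ : ℝ) (hγ : γ = (1 - α) / (2 - α))
    (hK₁ : K₁ = (L + μ) / 2 * (β - γ)) (hK₂ : K₂ = (μ - L) / 2 * (β - γ)) :
    ∀ x c : ℝ, x ≠ c →
      |fracGrad α β c f x - deriv f x - K₁ * (x - c)| ≤ K₂ * |x - c| := by
  intro x c hxc
  have hf' : ContDiff ℝ 1 (deriv f) := hf.deriv'
  have hf₁ : Continuous (deriv f) := hf'.continuous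
  have hf₂ : Continuous (deriv (deriv f)) := hf'.continuous_deriv le_rfl
  have hφ : ContinuousOn (fun u => deriv f (x - (x - c) * u) +
      β * (x - c) * deriv (deriv f) (x - (x - c) * u)) (Icc 0 1) := by fun_prop
  have key := abs_integral_mul_rpow_neg_sub_le hα.2 hφ fun u hu =>
    abs_deriv_add_mul_deriv_deriv_sub_le (hf'.differentiable one_ne_zero) hsmooth hconv hβ
      x (x - c) hu.1
  rw [fracGrad_eq_integral hα.2 β c hf₁ hf₂ hxc, hK₁, hK₂, hγ]
  convert key using 2 <;> ring

/-- approximation of the fractional gradient operator by the first derivative,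
case `β ≤ 0`. -/
theorem fracGrad_approx_of_beta_nonpos (f : ℝ → ℝ) (hf : ContDiff ℝ 2 f) (L μ : ℝ)
    (hμ : 0 ≤ μ) (hμL : μ ≤ L) (hsmooth : RSmooth L f) (hconv : RStrongConvex μ f)
    (α β : ℝ) (hα : α ∈ Set.Ioo (0 : ℝ) 1) (hβ : β ≤ 0)
    (γ K₁ K₂ : ℝ) (hγ : γ = (1 - α) / (2 - α))
    (hK₁ : K₁ = (L + μ) / 2 * (β - γ)) (hK₂ : K₂ = (μ - L) / 2 * (β - γ)) :
    ∀ x c : ℝ, x ≠ c →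
      |fracGrad α β c f x - deriv f x - K₁ * (x - c)| ≤ K₂ * |x - c| :=
  fracGrad_approx_of_beta_nonpos_general f hf L μ hsmooth hconv α β hα hβ γ K₁ K₂ hγ hK₁ hK₂
end
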